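/- Let |n| < 1, (α,p) ∈ K_{|n|}, and let v > u > 0 with p > 1. Then for all vectors a, b ∈ ℝ^d, the quantity e = |v−u|^{p−2} ( (Q_{α,p}(v,u))₁₁ |a|² + 2(Q_{α,p}(v,u))₁₂ a·b + (Q_{α,p}(v,u))₂₂ |b|² ) is nonnegative, and it is symmetric under the simultaneous exchange (v,a) ↔ (u,b). -/

import Mathlib

open MeasureTheory Set Filter Topology

noncomputable section

/-- The critical exponent `P₋(α) = 1 + (2/n²)(1-α)(α - √(α²-n²))`. -/
def Pminus (n a : ℝ) : ℝ := 1 + (2 / n ^ 2) * (1 - a) * (a - Real.sqrt (a ^ 2 - n ^ 2))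

/-- The critical exponent `P₊(α) = 1 + (2/n²)(1-α)(α + √(α²-n²))`. -/
def Pplus (n a : ℝ) : ℝ := 1 + (2 / n ^ 2) * (1 - a) * (a + Real.sqrt (a ^ 2 - n ^ 2))

/-- The admissible set `K_{|n|}` of pairs `(α,p)`. -/
def Kset (n : ℝ) : Set (ℝ × ℝ) :=
  if n = 0 then {q | 0 < q.1 ∧ q.1 ≤ 1 ∧ 1 ≤ q.1 * q.2}
  else {q | |n| ≤ q.1 ∧ q.1 ≤ 1 ∧ Pminus n q.1 ≤ q.2 ∧ q.2 ≤ Pplus n q.1}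

/-- The symmetric matrix `Q_{α,p}(v,u)`, with `γ = n/α`, `Γ = (1-α)/(α(p-1))`,
and the convention `Q_{1,1} = 0`. -/
def Qmat (n a p v u : ℝ) : Matrix (Fin 2) (Fin 2) ℝ :=
  if a = 1 ∧ p = 1 then 0 else
  (p - 1) • !![v ^ (n / a) * (1 + ((1 - a) / (a * (p - 1))) * (u / v - 1)),
      -(v ^ (n / a) + u ^ (n / a)) / 2;
      -(v ^ (n / a) + u ^ (n / a)) / 2,
      u ^ (n / a) * (1 + ((1 - a) / (a * (p - 1))) * (v / u - 1))]

/-- The symmetric matrix `M_{α,p}`, with `γ = n/α`, `Γ = (1-α)/(α(p-1))`,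
and the convention `M_{1,1} = 0`. -/
def Mmat (n a p : ℝ) : Matrix (Fin 2) (Fin 2) ℝ :=
  if a = 1 ∧ p = 1 then 0 else
  (p - 1) • !![(1 : ℝ), -((1 - a) / (a * (p - 1))) + (n / a) / 2;
      -((1 - a) / (a * (p - 1))) + (n / a) / 2,
      ((1 - a) / (a * (p - 1))) * (1 - n / a)]

abbrev Euc (d : ℕ) := EuclideanSpace ℝ (Fin d)

/-- The quadratic form `(X,Y)ᵀ Q (X,Y) = Q₁₁|X|² + 2Q₁₂ X·Y + Q₂₂|Y|²`. -/
def quadQ {d : ℕ} (Q : Matrix (Fin 2) (Fin 2) ℝ) (X Y : Euc d) : ℝ :=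
  Q 0 0 * ‖X‖ ^ 2 + 2 * Q 0 1 * (inner ℝ X Y : ℝ) + Q 1 1 * ‖Y‖ ^ 2

/-!
With `γ = n/α` and `Γ = (1-α)/(α(p-1))`, membership in `K_{|n|}` amounts to `γ² ≤ 4Γ(1-Γ)`,
which forces `0 ≤ Γ ≤ 1` and `|γ| ≤ 1`. The diagonal entries of `Q` are then nonnegative, and
`det Q ≥ 0` reduces to `(v^γ - u^γ)² ≤ 4Γ(1-Γ)(uv)^(γ-1)(v-u)²`. This follows from
`(v^γ - u^γ)² ≤ γ²(uv)^(γ-1)(v-u)²`, which in logarithmic coordinates centred at `√(uv)` is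
`|sinh(γx)| ≤ |γ| |sinh x|`, a consequence of the convexity of `sinh` on `[0, ∞)`.
A positive semidefinite `2 × 2` matrix gives a nonnegative form on pairs of vectors by
Cauchy–Schwarz. The exchange symmetry holds entrywise.
-/

namespace Real

theorem convexOn_sinh : ConvexOn ℝ (Ici 0) sinh := by
  refine MonotoneOn.convexOn_of_deriv (convex_Ici 0) continuous_sinh.continuousOn
    differentiable_sinh.differentiableOn ?_
  rw [deriv_sinh, interior_Ici]
  exact cosh_strictMonoOn.monotoneOn.mono Ioi_subset_Ici_self

theorem abs_sinh_mul_le {c : ℝ} (hc : |c| ≤ 1) (x : ℝ) : |sinh (c * x)| ≤ |c| * |sinh x| := by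
  have h := convexOn_sinh.2 (mem_Ici.2 (abs_nonneg x)) (mem_Ici.2 le_rfl)
    (abs_nonneg c) (sub_nonneg.2 hc) (add_sub_cancel _ _)
  simp only [smul_eq_mul, mul_zero, add_zero, sinh_zero] at h
  rwa [abs_sinh, abs_sinh, abs_mul]

theorem exp_sub_exp (x y : ℝ) :
    exp x - exp y = 2 * exp ((x + y) / 2) * sinh ((x - y) / 2) := by
  have hx : exp x = exp ((x + y) / 2) * exp ((x - y) / 2) := by rw [← exp_add]; ring_nf
  have hy : exp y = exp ((x + y) / 2) * exp (-((x - y) / 2)) := by rw [← exp_add]; ring_nf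
  rw [sinh_eq, hx, hy]
  ring

theorem sq_rpow_sub_rpow_le {u v γ : ℝ} (hu : 0 < u) (hv : 0 < v) (hγ : |γ| ≤ 1) :
    (v ^ γ - u ^ γ) ^ 2 ≤ γ ^ 2 * (u * v) ^ (γ - 1) * (v - u) ^ 2 := by
  obtain ⟨s, rfl⟩ : ∃ s, exp s = v := ⟨log v, exp_log hv⟩
  obtain ⟨r, rfl⟩ : ∃ r, exp r = u := ⟨log u, exp_log hu⟩
  have hpow : exp s ^ γ - exp r ^ γ = 2 * exp (γ * (s + r) / 2) * sinh (γ * ((s - r) / 2)) := by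
    rw [← exp_mul, ← exp_mul, exp_sub_exp]; ring_nf
  have hmean : (exp r * exp s) ^ (γ - 1) * exp ((s + r) / 2) ^ 2 = exp (γ * (s + r) / 2) ^ 2 := by
    rw [← exp_add, ← exp_mul, ← exp_nat_mul, ← exp_nat_mul, ← exp_add]
    ring_nf
  have hsinh := pow_le_pow_left₀ (abs_nonneg _) (abs_sinh_mul_le hγ ((s - r) / 2)) 2
  rw [mul_pow, sq_abs, sq_abs, sq_abs] at hsinh
  calc (exp s ^ γ - exp r ^ γ) ^ 2
      = 4 * exp (γ * (s + r) / 2) ^ 2 * sinh (γ * ((s - r) / 2)) ^ 2 := by rw [hpow]; ring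
    _ ≤ 4 * exp (γ * (s + r) / 2) ^ 2 * (γ ^ 2 * sinh ((s - r) / 2) ^ 2) := by gcongr
    _ = γ ^ 2 * (exp r * exp s) ^ (γ - 1) * (exp s - exp r) ^ 2 := by
      rw [exp_sub_exp, ← hmean]; ring

end Real

theorem quadQ_nonneg {d : ℕ} {Q : Matrix (Fin 2) (Fin 2) ℝ} (h₀₀ : 0 ≤ Q 0 0) (h₁₁ : 0 ≤ Q 1 1)
    (hdet : Q 0 1 ^ 2 ≤ Q 0 0 * Q 1 1) (a b : Euc d) : 0 ≤ quadQ Q a b := by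
  set A := Q 0 0
  set C := Q 1 1
  set D := Q 0 1
  have hcross : -(|D| * (‖a‖ * ‖b‖)) ≤ D * inner ℝ a b := by
    refine neg_le_of_abs_le ?_
    rw [abs_mul]
    exact mul_le_mul_of_nonneg_left (abs_real_inner_le_norm a b) (abs_nonneg D)
  suffices h : 0 ≤ A * ‖a‖ ^ 2 - 2 * |D| * (‖a‖ * ‖b‖) + C * ‖b‖ ^ 2 by
    unfold quadQ; linarith
  rcases h₀₀.eq_or_lt with hA | hA
  · have hD : |D| = 0 := by rw [abs_eq_zero]; nlinarith
    simpa [← hA, hD] using mul_nonneg h₁₁ (sq_nonneg ‖b‖)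
  · -- completing the square: `A * form ≥ (A‖a‖ - |D|‖b‖)²` since `|D|² ≤ AC`
    refine nonneg_of_mul_nonneg_right ?_ hA
    nlinarith [sq_nonneg (A * ‖a‖ - |D| * ‖b‖), sq_abs D, sq_nonneg ‖b‖]

section Qmat

variable {n α p γ Γ u v : ℝ}

theorem sq_rpow_add_div_two_le (hu : 0 < u) (hv : 0 < v) (hΓ : γ ^ 2 ≤ 4 * Γ * (1 - Γ)) :
    ((v ^ γ + u ^ γ) / 2) ^ 2 ≤ v ^ γ * (1 + Γ * (u / v - 1)) * (u ^ γ * (1 + Γ * (v / u - 1))) := by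
  have hγ : |γ| ≤ 1 := by
    rw [← sq_le_one_iff_abs_le_one]; nlinarith [sq_nonneg (2 * Γ - 1)]
  have hmean : v ^ γ * u ^ γ = (u * v) ^ (γ - 1) * (u * v) := by
    rw [← Real.mul_rpow hv.le hu.le, mul_comm v u, Real.rpow_sub_one (mul_pos hu hv).ne',
      div_mul_cancel₀ _ (mul_pos hu hv).ne']
  have hprod : v ^ γ * (1 + Γ * (u / v - 1)) * (u ^ γ * (1 + Γ * (v / u - 1)))
      = v ^ γ * u ^ γ + Γ * (1 - Γ) * ((u * v) ^ (γ - 1) * (v - u) ^ 2) := by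
    have hexpand : v ^ γ * (1 + Γ * (u / v - 1)) * (u ^ γ * (1 + Γ * (v / u - 1)))
        = v ^ γ * u ^ γ + Γ * (1 - Γ) * (v ^ γ * u ^ γ) * (v - u) ^ 2 / (u * v) := by
      field_simp; ring
    rw [hexpand, hmean]; field_simp
  have hdiff := Real.sq_rpow_sub_rpow_le hu hv hγ
  have hW : 0 ≤ (u * v) ^ (γ - 1) * (v - u) ^ 2 := by positivity
  rw [hprod]
  nlinarith [mul_le_mul_of_nonneg_right hΓ hW]

theorem Qmat_of_ne_one (hp : p ≠ 1) :
    Qmat n α p v u = (p - 1) • !![v ^ (n / α) * (1 + ((1 - α) / (α * (p - 1))) * (u / v - 1)),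
      -(v ^ (n / α) + u ^ (n / α)) / 2;
      -(v ^ (n / α) + u ^ (n / α)) / 2,
      u ^ (n / α) * (1 + ((1 - α) / (α * (p - 1))) * (v / u - 1))] :=
  if_neg fun h => hp h.2

theorem quadQ_Qmat_nonneg {d : ℕ} (hp : 1 < p)
    (hΓ : (n / α) ^ 2 ≤ 4 * ((1 - α) / (α * (p - 1))) * (1 - (1 - α) / (α * (p - 1))))
    (hu : 0 < u) (hv : 0 < v) (a b : Euc d) : 0 ≤ quadQ (Qmat n α p v u) a b := by
  set Γ := (1 - α) / (α * (p - 1))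
  have hΓ₀ : 0 ≤ Γ := by nlinarith [sq_nonneg (n / α)]
  have hΓ₁ : Γ ≤ 1 := by nlinarith [sq_nonneg (n / α)]
  have hweight : ∀ r : ℝ, 0 < r → 0 ≤ 1 + Γ * (r - 1) := fun r hr => by nlinarith
  have hq : 0 < p - 1 := sub_pos.2 hp
  apply quadQ_nonneg
  all_goals simp only [Qmat_of_ne_one hp.ne', Matrix.smul_apply, Matrix.of_apply,
    Matrix.cons_val', Matrix.cons_val_zero, Matrix.cons_val_one, Matrix.empty_val',
    Matrix.cons_val_fin_one, smul_eq_mul]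
  · exact mul_nonneg hq.le (mul_nonneg (by positivity) (hweight _ (by positivity)))
  · exact mul_nonneg hq.le (mul_nonneg (by positivity) (hweight _ (by positivity)))
  · have := sq_rpow_add_div_two_le hu hv hΓ
    rw [mul_pow, neg_div, neg_sq]
    nlinarith [mul_le_mul_of_nonneg_left this (sq_nonneg (p - 1))]

theorem quadQ_Qmat_swap {d : ℕ} (a b : Euc d) :
    quadQ (Qmat n α p u v) b a = quadQ (Qmat n α p v u) a b := by
  unfold quadQ Qmat
  split_ifs
  · simp
  · simp only [Matrix.smul_apply, Matrix.of_apply, Matrix.cons_val', Matrix.cons_val_zero,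
      Matrix.cons_val_one, Matrix.cons_val_fin_one, smul_eq_mul, real_inner_comm]
    ring

theorem discrim_nonpos_of_mem_Kset (hK : (α, p) ∈ Kset n) :
    0 < α ∧ n ^ 2 * (p - 1) ^ 2 ≤ 4 * (1 - α) * (α * (p - 1) - (1 - α)) := by
  unfold Kset at hK
  split_ifs at hK with hn <;> simp only [mem_ofPred_eq] at hK
  · obtain ⟨hα₀, hα₁, hαp⟩ := hK
    subst hn
    exact ⟨hα₀, by nlinarith⟩
  · obtain ⟨hnα, -, hPm, hPp⟩ := hK
    have hn2 : 0 < n ^ 2 := by positivity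
    have hα₀ : 0 < α := (abs_pos.2 hn).trans_le hnα
    set s := √(α ^ 2 - n ^ 2)
    have hs : s ^ 2 = α ^ 2 - n ^ 2 :=
      Real.sq_sqrt (by nlinarith [sq_abs n, abs_nonneg n])
    -- `P₋ ≤ p ≤ P₊` says that `p - 1` lies between the roots of a quadratic in `p - 1`
    have hlo : 2 * (1 - α) * (α - s) ≤ n ^ 2 * (p - 1) := by
      unfold Pminus at hPm
      rw [← div_le_iff₀' hn2]; linarith [show 2 / n ^ 2 * (1 - α) * (α - s)
        = 2 * (1 - α) * (α - s) / n ^ 2 by ring]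
    have hhi : n ^ 2 * (p - 1) ≤ 2 * (1 - α) * (α + s) := by
      unfold Pplus at hPp
      rw [← le_div_iff₀' hn2]; linarith [show 2 / n ^ 2 * (1 - α) * (α + s)
        = 2 * (1 - α) * (α + s) / n ^ 2 by ring]
    have hroots := mul_nonpos_of_nonneg_of_nonpos (sub_nonneg.2 hlo) (sub_nonpos.2 hhi)
    refine ⟨hα₀, le_of_mul_le_mul_left ?_ hn2⟩
    linear_combination hroots + 4 * (1 - α) ^ 2 * hs

theorem sq_div_le_of_mem_Kset (hK : (α, p) ∈ Kset n) (hp : 1 < p) :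
    (n / α) ^ 2 ≤ 4 * ((1 - α) / (α * (p - 1))) * (1 - (1 - α) / (α * (p - 1))) := by
  obtain ⟨hα, hdiscrim⟩ := discrim_nonpos_of_mem_Kset hK
  have hq : 0 < p - 1 := sub_pos.2 hp
  have hαq : 0 < α * (p - 1) := mul_pos hα hq
  have hrhs : 4 * ((1 - α) / (α * (p - 1))) * (1 - (1 - α) / (α * (p - 1)))
      = 4 * (1 - α) * (α * (p - 1) - (1 - α)) / (α * (p - 1)) ^ 2 := by
    field_simp
  rw [hrhs, le_div_iff₀ (pow_pos hαq 2)]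
  calc (n / α) ^ 2 * (α * (p - 1)) ^ 2 = n ^ 2 * (p - 1) ^ 2 := by field_simp
    _ ≤ _ := hdiscrim

end Qmat

theorem e_nonneg_and_symmetric_general (d : ℕ) (n α p : ℝ)
    (hK : (α, p) ∈ Kset n) (hp : 1 < p) (v u : ℝ) (hu : 0 < u) (huv : u < v)
    (a b : Euc d) :
    0 ≤ |v - u| ^ (p - 2) * quadQ (Qmat n α p v u) a b ∧
    |v - u| ^ (p - 2) * quadQ (Qmat n α p v u) a b
      = |u - v| ^ (p - 2) * quadQ (Qmat n α p u v) b a := by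
  have hq := quadQ_Qmat_nonneg hp (sq_div_le_of_mem_Kset hK hp) hu (hu.trans huv) a b
  refine ⟨mul_nonneg (Real.rpow_nonneg (abs_nonneg _) _) hq, ?_⟩
  rw [abs_sub_comm, quadQ_Qmat_swap]

/-- for `|n| < 1`, `(α,p) ∈ K_{|n|}` with `p > 1` and `v > u > 0`, the
quantity `e = |v-u|^{p-2} (a,b)ᵀ Q_{α,p}(v,u) (a,b)` is nonnegative for all vectors
`a, b ∈ ℝ^d`, and is symmetric under the exchange `(v,a) ↔ (u,b)`. -/
theorem e_nonneg_and_symmetric (d : ℕ) (hd : 1 ≤ d) (n α p : ℝ) (hn1 : |n| < 1)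
    (hK : (α, p) ∈ Kset n) (hp : 1 < p) (v u : ℝ) (hu : 0 < u) (huv : u < v)
    (a b : Euc d) :
    0 ≤ |v - u| ^ (p - 2) * quadQ (Qmat n α p v u) a b ∧
    |v - u| ^ (p - 2) * quadQ (Qmat n α p v u) a b
      = |u - v| ^ (p - 2) * quadQ (Qmat n α p u v) b a :=
  e_nonneg_and_symmetric_general d n α p hK hp v u hu huv a b
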